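/- Let K ⊆ L be an extension of fields with [L : K] = 2. Then the polynomial composite K + X·L[X] is a Noetherian ring. Moreover, if the fixed field of the automorphism group G(L|K) = Aut_K(L) equals K, then L is a normal extension of K. -/

import Mathlib

/-- The polynomial composite `A + X·B[X]`: the subring of `B[X]` of polynomials
whose constant coefficient lies in `A`. -/
def Subring.composite {B : Type*} [CommRing B] (A : Subring B) : Subring (Polynomial B) where
  carrier := {f : Polynomial B | f.coeff 0 ∈ A}
  mul_mem' {f g} hf hg := by
    simp only [Set.mem_setOf_eq, Polynomial.mul_coeff_zero] at *
    exact mul_mem hf hg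
  one_mem' := by
    simp only [Set.mem_setOf_eq, Polynomial.coeff_one_zero]
    exact one_mem A
  add_mem' {f g} hf hg := by
    simp only [Set.mem_setOf_eq, Polynomial.coeff_add] at *
    exact add_mem hf hg
  zero_mem' := by
    simp only [Set.mem_setOf_eq, Polynomial.coeff_zero]
    exact zero_mem A
  neg_mem' {f} hf := by
    simp only [Set.mem_setOf_eq, Polynomial.coeff_neg] at *
    exact neg_mem hf

theorem Subring.mem_composite {B : Type*} [CommRing B] (A : Subring B) (f : Polynomial B) :
    f ∈ A.composite ↔ f.coeff 0 ∈ A := Iff.rfl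

/-!
The composite `R + X·B[X]` lies between the image of `R[X]` and `B[X]`, so it is an
`R[X]`-subalgebra of `B[X]`. As `B[X] ≅ R[X] ⊗[R] B` is a finite module over the Noetherian ring
`R[X]`, so is the composite, hence it is a Noetherian ring. Normality holds for every quadratic
extension: the minimal polynomial of an element has degree at most two and one root in `L`.
-/

open Polynomial

section

attribute [local instance] Polynomial.algebra

variable (R B : Type*) [CommRing R] [CommRing B] [Algebra R B]

instance Module.Finite.polynomial [Module.Finite R B] : Module.Finite R[X] B[X] :=
  .equiv (Algebra.IsPushout.equiv R R[X] B B[X]).toLinearEquiv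

def compositeSubalgebra : Subalgebra R[X] B[X] where
  toSubsemiring := (algebraMap R B).range.composite.toSubsemiring
  algebraMap_mem' p := by
    show (Polynomial.map (algebraMap R B) p).coeff 0 ∈ (algebraMap R B).range
    rw [coeff_map]
    exact ⟨_, rfl⟩

variable {R B}

theorem isNoetherianRing_composite_range [IsNoetherianRing R] [Module.Finite R B] :
    IsNoetherianRing (algebraMap R B).range.composite :=
  have : IsNoetherian R[X] (compositeSubalgebra R B) :=
    inferInstanceAs (IsNoetherian R[X] (Subalgebra.toSubmodule (compositeSubalgebra R B)))
  (isNoetherian_of_tower R[X] this : IsNoetherianRing (compositeSubalgebra R B))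

end

/-- For an extension of fields `K ⊆ L` with `[L : K] = 2`, the composite `K + X·L[X]` is
Noetherian; moreover, if the fixed field of `G(L|K) = Aut_K(L)` is `K`, then `L` is a normal
extension of `K`. -/
theorem composite_quadratic (K L : Type*) [Field K] [Field L] [Algebra K L]
    (hdeg : Module.finrank K L = 2) :
    IsNoetherianRing ((algebraMap K L).range.composite) ∧
      ((∀ x : L, (∀ σ : L ≃ₐ[K] L, σ x = x) → ∃ k : K, algebraMap K L k = x) →
        Normal K L) :=
  have : Module.Finite K L := Module.finite_of_finrank_eq_succ hdeg
  have : Algebra.IsQuadraticExtension K L := ⟨hdeg⟩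
  ⟨isNoetherianRing_composite_range, fun _ ↦ inferInstance⟩
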